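/- There is no local valency impossibility proof for (n−1)-set agreement: let n ≥ 3 and R ≥ 2, and for each ℓ ∈ {1,…,R−1} let val^ℓ denote the set agreement valency map on χ^ℓ(σ). For every sequence σ = σ₀, σ₁, …, σ_{R−1} in which σ_ℓ is an (n−1)-simplex of χ(σ_{ℓ−1}) for each ℓ ∈ {1,…,R−1} (so σ_ℓ ∈ χ^ℓ(σ)), there exists a coloring c of χ^R(σ) with values in {0,…,n−1} such that: c is consistent and complete with val^{R−1}; c(χ^{R−ℓ}(τ)) ⊆ val^ℓ(τ) for every ℓ ∈ {1,…,R−1} and every simplex τ ∈ χ^ℓ(σ); and no simplex of χ(σ_{R−1}) receives n distinct values under c. -/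

import Mathlib

open scoped Classical

/-- Vertices of the ℓ-th chromatic subdivision of the standard simplex on `Fin n`. -/
def ChromV (n : ℕ) : ℕ → Type
  | 0 => Fin n
  | ℓ + 1 => Fin n × Finset (ChromV n ℓ)

instance chromVDecEq (n : ℕ) : ∀ ℓ, DecidableEq (ChromV n ℓ)
  | 0 => inferInstanceAs (DecidableEq (Fin n))
  | ℓ + 1 =>
    letI := chromVDecEq n ℓ
    inferInstanceAs (DecidableEq (Fin n × Finset (ChromV n ℓ)))

/-- The color of a vertex of the ℓ-th chromatic subdivision. -/
def chromCol (n : ℕ) : ∀ ℓ, ChromV n ℓ → Fin n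
  | 0, v => v
  | _ + 1, v => v.1

/-- `ids γ`: the set of colors of the vertices of a simplex `γ`. -/
def ids {n ℓ : ℕ} (γ : Finset (ChromV n ℓ)) : Finset (Fin n) :=
  γ.image (chromCol n ℓ)

/-- One step of standard chromatic subdivision of a set of (nonempty) simplexes. -/
def subdiv {α : Type} {n : ℕ} (col : α → Fin n) (K : Set (Finset α)) :
    Set (Finset (Fin n × Finset α)) :=
  { s | s.Nonempty ∧
    (∀ v ∈ s, v.2 ∈ K ∧ v.1 ∈ v.2.image col) ∧
    (∀ u ∈ s, ∀ v ∈ s, u ≠ v → u.1 ≠ v.1) ∧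
    (∀ u ∈ s, ∀ v ∈ s, u.2 ⊆ v.2 ∨ v.2 ⊆ u.2) ∧
    (∀ u ∈ s, ∀ v ∈ s, u.1 ∈ v.2.image col → u.2 ⊆ v.2) }

/-- The faces of a simplex `τ`: its nonempty subsets. -/
def facesOf {α : Type} (τ : Finset α) : Set (Finset α) :=
  { s | s.Nonempty ∧ s ⊆ τ }

/-- The ℓ-th chromatic subdivision `χ^ℓ(ρ)` of a face `ρ` of σ,
as a subcomplex of `χ^ℓ(σ)`. -/
def chromSub (n : ℕ) (ρ : Finset (Fin n)) : ∀ ℓ, Set (Finset (ChromV n ℓ))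
  | 0 => facesOf ρ
  | ℓ + 1 => subdiv (chromCol n ℓ) (chromSub n ρ ℓ)

/-- Iterated chromatic subdivision of a subcomplex sitting at level ℓ. -/
def iterSub (n ℓ : ℕ) : ∀ m, Set (Finset (ChromV n ℓ)) → Set (Finset (ChromV n (ℓ + m)))
  | 0, K => K
  | m + 1, K => subdiv (chromCol n (ℓ + m)) (iterSub n ℓ m K)

/-- `χ^m(τ)` for a simplex `τ ∈ χ^ℓ(σ)`: the subcomplex of `χ^{ℓ+m}(σ)` obtained by
iterated subdivision of `τ` and its faces. -/
def subOf {n ℓ : ℕ} (m : ℕ) (τ : Finset (ChromV n ℓ)) : Set (Finset (ChromV n (ℓ + m))) :=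
  iterSub n ℓ m (facesOf τ)

/-- The vertices of a subcomplex. -/
def vertexSet {n ℓ : ℕ} (L : Set (Finset (ChromV n ℓ))) : Set (ChromV n ℓ) :=
  { v | ∃ s ∈ L, v ∈ s }

/-- `c(L)`: the set of values taken by a coloring `c` on the vertices of a subcomplex `L`. -/
def colorSet {n ℓ : ℕ} {β : Type} (c : ChromV n ℓ → β) (L : Set (Finset (ChromV n ℓ))) :
    Set β :=
  c '' vertexSet L

/-- The carrier of a simplex `γ ∈ χ^ℓ(σ)`: the smallest face `ρ` of σ with `γ ∈ χ^ℓ(ρ)`,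
realized as the intersection of all such faces. -/
noncomputable def carr {n ℓ : ℕ} (γ : Finset (ChromV n ℓ)) : Finset (Fin n) :=
  Finset.univ.filter fun i => ∀ ρ : Finset (Fin n), γ ∈ chromSub n ρ ℓ → i ∈ ρ

/-- The set agreement valency map: `val(τ) = ids(τ)` if `|τ| ≤ n-2`, else `carr(τ)`. -/
noncomputable def saVal {n ℓ : ℕ} (τ : Finset (ChromV n ℓ)) : Finset (Fin n) :=
  if τ.card ≤ n - 2 then ids τ else carr τ

/-- The weak symmetry breaking valency map: `{1}` on simplexes of dimension ≤ n-3,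
`{0,1}` otherwise. -/
def wsbVal {n ℓ : ℕ} (τ : Finset (ChromV n ℓ)) : Set (Fin 2) :=
  if τ.card ≤ n - 2 then {1} else Set.univ

/-- The simplicial map on the ℓ-th chromatic subdivision induced functorially by a
map `f` on the colors/vertices of σ. -/
def vmap (n : ℕ) (f : Fin n → Fin n) : ∀ ℓ, ChromV n ℓ → ChromV n ℓ
  | 0, v => f v
  | ℓ + 1, v => (f v.1, v.2.image (vmap n f ℓ))

/-- The order-preserving bijection between two faces `s` and `t` of σ of the same
cardinality (extended by the identity elsewhere). -/
noncomputable def opBij {n : ℕ} (s t : Finset (Fin n)) (i : Fin n) : Fin n :=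
  if h : i ∈ s ∧ s.card = t.card then
    ↑(t.orderIsoOfFin rfl (Fin.cast h.2 ((s.orderIsoOfFin rfl).symm ⟨i, h.1⟩)))
  else i

/-- A coloring of `χ^L(σ)` is symmetric if it is invariant under the order-preserving
simplicial bijections between subdivided faces of σ of the same dimension. -/
def SymmColoring {n L : ℕ} {β : Type} (b : ChromV n L → β) : Prop :=
  ∀ s t : Finset (Fin n), s.Nonempty → t.Nonempty → s ≠ t → s.card = t.card →
    ∀ v ∈ vertexSet (chromSub n s L), b (vmap n (opBij s t) L v) = b v

/-- Transport of vertices along an equality of levels. -/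
def castV (n : ℕ) {a b : ℕ} (h : a = b) : ChromV n a → ChromV n b :=
  fun v => h ▸ v

/-!
Color a vertex `(a, γ)` of `χ^R(σ)`, where `γ ∈ χ^{R-1}(σ)`, by its process color `a` unless `γ`
has at least `n - 1` vertices. If `γ` has exactly `n - 1` vertices and its carrier contains a
color `e ∉ ids γ`, one designated vertex `(a, γ)` with `a ≠ j₀` gets the color `e`; this makes the
coloring complete. The other vertices over large faces of `σ_{R-1}` get a fixed color `j₀`, chosen
different from the color of the top vertex `w` of `σ_{R-1}`. The view of `w` contains every color,
so every face containing `w` has full carrier; the only face with `n - 1` vertices missing the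
color `j₀` contains `w`, so the coloring stays consistent.

In a rainbow simplex of `χ(σ_{R-1})` the top vertex gets `j₀`, so the second one is a designated
vertex `(a, γ)`. The vertex colored `a` has its view inside `γ` but not equal to `γ`, since vertices
with view `γ` get `e` or `j₀`; so its view is small and its process color is `a`, the process color
of the second vertex.
-/

section Subdivision

variable {α : Type} {n : ℕ} {col : α → Fin n} {K : Set (Finset α)}
  {s t : Finset (Fin n × Finset α)}

lemma mem_subdiv_of_subset (hs : s ∈ subdiv col K) (hts : t ⊆ s) (ht : t.Nonempty) :
    t ∈ subdiv col K := by
  obtain ⟨-, h2, h3, h4, h5⟩ := hs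
  exact ⟨ht, fun v hv => h2 v (hts hv), fun u hu v hv => h3 u (hts hu) v (hts hv),
    fun u hu v hv => h4 u (hts hu) v (hts hv), fun u hu v hv => h5 u (hts hu) v (hts hv)⟩

lemma subdiv_mono {K' : Set (Finset α)} (h : K ⊆ K') : subdiv col K ⊆ subdiv col K' := by
  rintro s ⟨h1, h2, h3, h4, h5⟩
  exact ⟨h1, fun v hv => ⟨h (h2 v hv).1, (h2 v hv).2⟩, h3, h4, h5⟩

lemma singleton_mem_subdiv {x : Fin n × Finset α} (h1 : x.2 ∈ K) (h2 : x.1 ∈ x.2.image col) :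
    {x} ∈ subdiv col K := by
  refine ⟨Finset.singleton_nonempty x, ?_, ?_, ?_, ?_⟩ <;> simp_all

lemma card_image_fst_of_mem_subdiv (hs : s ∈ subdiv col K) : (s.image Prod.fst).card = s.card :=
  Finset.card_image_of_injOn fun u hu v hv huv => by_contra fun hne => hs.2.2.1 u hu v hv hne huv

lemma exists_top_of_mem_subdiv (hs : s ∈ subdiv col K) : ∃ w ∈ s, ∀ v ∈ s, v.2 ⊆ w.2 := by
  obtain ⟨w, hw, hmax⟩ := s.exists_max_image (fun v => v.2.card) hs.1
  refine ⟨w, hw, fun v hv => ?_⟩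
  rcases hs.2.2.2.1 v hv w hw with h | h
  · exact h
  · rw [Finset.eq_of_subset_of_card_le h (hmax v hv)]

lemma image_fst_subset_of_top (hs : s ∈ subdiv col K) {w : Fin n × Finset α}
    (hw : ∀ v ∈ s, v.2 ⊆ w.2) : s.image Prod.fst ⊆ w.2.image col := by
  intro a ha
  obtain ⟨v, hv, rfl⟩ := Finset.mem_image.1 ha
  exact Finset.image_subset_image (hw v hv) (hs.2.1 v hv).2

end Subdivision

section Chromatic

variable {n : ℕ}

lemma mem_chromSub_of_subset : ∀ {ℓ : ℕ} {ρ : Finset (Fin n)} {γ γ' : Finset (ChromV n ℓ)},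
    γ ∈ chromSub n ρ ℓ → γ' ⊆ γ → γ'.Nonempty → γ' ∈ chromSub n ρ ℓ
  | 0, _, _, _, h, hsub, hne => ⟨hne, hsub.trans h.2⟩
  | _ + 1, _, _, _, h, hsub, hne => mem_subdiv_of_subset h hsub hne

lemma iterSub_mono (ℓ : ℕ) : ∀ (m : ℕ) {K K' : Set (Finset (ChromV n ℓ))}, K ⊆ K' →
    iterSub n ℓ m K ⊆ iterSub n ℓ m K'
  | 0, _, _, h => h
  | m + 1, _, _, h => subdiv_mono (iterSub_mono ℓ m h)

lemma iterSub_chromSub (ρ : Finset (Fin n)) (ℓ : ℕ) : ∀ m : ℕ,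
    iterSub n ℓ m (chromSub n ρ ℓ) = chromSub n ρ (ℓ + m)
  | 0 => rfl
  | m + 1 => congrArg (subdiv (chromCol n (ℓ + m))) (iterSub_chromSub ρ ℓ m)

lemma subOf_subset_chromSub {ℓ m : ℕ} {ρ : Finset (Fin n)} {τ : Finset (ChromV n ℓ)}
    (h : τ ∈ chromSub n ρ ℓ) : subOf m τ ⊆ chromSub n ρ (ℓ + m) := by
  rw [← iterSub_chromSub]
  exact iterSub_mono ℓ m fun _ hs => mem_chromSub_of_subset h hs.2 hs.1

lemma mem_vertexSet_subOf_succ {ℓ m : ℕ} {τ : Finset (ChromV n ℓ)} {v : ChromV n (ℓ + (m + 1))}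
    (hv : v ∈ vertexSet (subOf (m + 1) τ)) : v.2 ∈ subOf m τ ∧ v.1 ∈ ids v.2 := by
  obtain ⟨s, hs, hvs⟩ := hv
  exact hs.2.1 v hvs

lemma mk_mem_vertexSet_subOf_one {ℓ : ℕ} {τ τ' : Finset (ChromV n ℓ)} (hτ' : τ' ∈ facesOf τ)
    {a : Fin n} (ha : a ∈ ids τ') : ((a, τ') : ChromV n (ℓ + 1)) ∈ vertexSet (subOf 1 τ) :=
  ⟨{(a, τ')}, singleton_mem_subdiv hτ' ha, Finset.mem_singleton_self _⟩

lemma ids_subset_of_mem_chromSub : ∀ {ℓ : ℕ} {ρ : Finset (Fin n)} {γ : Finset (ChromV n ℓ)},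
    γ ∈ chromSub n ρ ℓ → ids γ ⊆ ρ
  | 0, _, _, h => fun _ hi => by
      obtain ⟨v, hv, rfl⟩ := Finset.mem_image.1 hi
      exact h.2 hv
  | _ + 1, _, _, h => fun _ hi => by
      obtain ⟨v, hv, rfl⟩ := Finset.mem_image.1 hi
      exact ids_subset_of_mem_chromSub (h.2.1 v hv).1 (h.2.1 v hv).2

lemma ids_subset_of_mem_subOf {ℓ : ℕ} {τ : Finset (ChromV n ℓ)} :
    ∀ {m : ℕ} {γ : Finset (ChromV n (ℓ + m))}, γ ∈ subOf m τ → ids γ ⊆ ids τ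
  | 0, _, h => Finset.image_subset_image h.2
  | _ + 1, _, h => fun _ hi => by
      obtain ⟨v, hv, rfl⟩ := Finset.mem_image.1 hi
      exact ids_subset_of_mem_subOf (h.2.1 v hv).1 (h.2.1 v hv).2

lemma card_ids_of_mem_chromSub : ∀ {ℓ : ℕ} {ρ : Finset (Fin n)} {γ : Finset (ChromV n ℓ)},
    γ ∈ chromSub n ρ ℓ → (ids γ).card = γ.card
  | 0, _, γ, _ => Finset.card_image_of_injective γ fun _ _ h => h
  | _ + 1, _, _, h => card_image_fst_of_mem_subdiv h

lemma mem_carr {ℓ : ℕ} {γ : Finset (ChromV n ℓ)} {i : Fin n} :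
    i ∈ carr γ ↔ ∀ ρ : Finset (Fin n), γ ∈ chromSub n ρ ℓ → i ∈ ρ := by
  simp [carr]

lemma ids_subset_carr {ℓ : ℕ} (γ : Finset (ChromV n ℓ)) : ids γ ⊆ carr γ :=
  fun _ hi => mem_carr.2 fun _ hρ => ids_subset_of_mem_chromSub hρ hi

lemma ids_snd_subset_carr {ℓ : ℕ} {γ : Finset (ChromV n (ℓ + 1))} {v : ChromV n (ℓ + 1)}
    (hv : v ∈ γ) : ids v.2 ⊆ carr γ :=
  fun _ hi => mem_carr.2 fun _ hρ => ids_subset_of_mem_chromSub (hρ.2.1 v hv).1 hi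

lemma carr_subset_of_mem_subOf {ℓ m : ℕ} {τ : Finset (ChromV n ℓ)}
    {γ : Finset (ChromV n (ℓ + m))} (hγ : γ ∈ subOf m τ) : carr γ ⊆ carr τ :=
  fun _ hi => mem_carr.2 fun ρ hρ => mem_carr.1 hi ρ (subOf_subset_chromSub hρ hγ)

lemma saVal_subset_of_mem_subOf {ℓ m : ℕ} {ρ : Finset (Fin n)} {τ : Finset (ChromV n ℓ)}
    (hτ : τ ∈ chromSub n ρ ℓ) {γ : Finset (ChromV n (ℓ + m))} (hγ : γ ∈ subOf m τ) :
    saVal γ ⊆ saVal τ := by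
  have hids := ids_subset_of_mem_subOf hγ
  have hcard : γ.card ≤ τ.card := by
    rw [← card_ids_of_mem_chromSub (subOf_subset_chromSub hτ hγ), ← card_ids_of_mem_chromSub hτ]
    exact Finset.card_le_card hids
  unfold saVal
  split_ifs
  · exact hids
  · exact hids.trans (ids_subset_carr τ)
  · omega
  · exact carr_subset_of_mem_subOf hγ

end Chromatic

lemma Finset.eq_of_notMem_of_card_eq_pred {α : Type} [Fintype α] [DecidableEq α] {s : Finset α}
    (hs : s.card = Fintype.card α - 1) {a b : α} (ha : a ∉ s) (hb : b ∉ s) : a = b := by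
  have h : (Finset.univ \ s).card ≤ 1 := by
    rw [Finset.card_sdiff_of_subset (Finset.subset_univ s), Finset.card_univ]
    omega
  exact Finset.card_le_one.1 h a (by simpa using ha) b (by simpa using hb)

section Coloring

variable {n L : ℕ} (j₀ : Fin n) (σL : Finset (ChromV n L))

noncomputable def designatedColor {ℓ : ℕ} (γ : Finset (ChromV n ℓ)) : Fin n :=
  if h : ((ids γ).erase j₀).Nonempty then h.choose else j₀

lemma designatedColor_mem {ℓ : ℕ} {γ : Finset (ChromV n ℓ)} (h : 1 < (ids γ).card) :
    designatedColor j₀ γ ∈ (ids γ).erase j₀ := by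
  have hne : ((ids γ).erase j₀).Nonempty := by
    rw [← Finset.card_pos]
    have := Finset.pred_card_le_card_erase (s := ids γ) (a := j₀)
    omega
  rw [designatedColor, dif_pos hne]
  exact hne.choose_spec

noncomputable def saColoring (v : ChromV n (L + 1)) : Fin n :=
  if v.2.card ≤ n - 2 then v.1
  else if h : v.2.card = n - 1 ∧ v.1 = designatedColor j₀ v.2 ∧ (carr v.2 \ ids v.2).Nonempty
    then h.2.2.choose
  else if v.2 ⊆ σL then j₀ else v.1

lemma saColoring_of_card_le {v : ChromV n (L + 1)} (h : v.2.card ≤ n - 2) :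
    saColoring j₀ σL v = v.1 := by
  rw [saColoring, if_pos h]

lemma saColoring_of_lt_card {v : ChromV n (L + 1)} (hσ : v.2 ⊆ σL) (h : n - 1 < v.2.card) :
    saColoring j₀ σL v = j₀ := by
  rw [saColoring, if_neg (by omega), dif_neg (by rintro ⟨h', -⟩; omega), if_pos hσ]

lemma saColoring_mem_of_designated (hn : 2 ≤ n) {v : ChromV n (L + 1)} (hcard : v.2.card = n - 1)
    (hdes : v.1 = designatedColor j₀ v.2) (hE : (carr v.2 \ ids v.2).Nonempty) :
    saColoring j₀ σL v ∈ carr v.2 \ ids v.2 := by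
  rw [saColoring, if_neg (by omega), dif_pos ⟨hcard, hdes, hE⟩]
  exact hE.choose_spec

lemma saColoring_of_ne {v : ChromV n (L + 1)} (hσ : v.2 ⊆ σL) (h : n - 2 < v.2.card)
    (hne : saColoring j₀ σL v ≠ j₀) :
    v.2.card = n - 1 ∧ v.1 = designatedColor j₀ v.2 ∧ saColoring j₀ σL v ∈ carr v.2 \ ids v.2 := by
  rw [saColoring, if_neg (by omega)] at hne ⊢
  split_ifs at hne ⊢ with hE
  · exact ⟨hE.1, hE.2.1, hE.2.2.choose_spec⟩
  · exact absurd rfl hne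

lemma saColoring_mem_saVal (hj₀ : ∀ γ ⊆ σL, n - 1 ≤ γ.card → j₀ ∈ carr γ)
    {v : ChromV n (L + 1)} (hv : v.1 ∈ ids v.2) : saColoring j₀ σL v ∈ saVal v.2 := by
  unfold saVal saColoring
  split_ifs with hsmall hE hσ
  · exact hv
  · exact (Finset.mem_sdiff.1 hE.2.2.choose_spec).1
  · exact hj₀ _ hσ (by omega)
  · exact ids_subset_carr _ hv

lemma saColoring_castV_mem_saVal (hj₀ : ∀ γ ⊆ σL, n - 1 ≤ γ.card → j₀ ∈ carr γ) {p : ℕ}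
    (h : p = L) {v : ChromV n (p + 1)} (hv : v.1 ∈ ids v.2) :
    saColoring j₀ σL (castV n (congrArg (· + 1) h) v) ∈ saVal v.2 := by
  subst h
  exact saColoring_mem_saVal j₀ σL hj₀ hv

theorem colorSet_saColoring_subset_saVal (hj₀ : ∀ γ ⊆ σL, n - 1 ≤ γ.card → j₀ ∈ carr γ)
    {ℓ m : ℕ} (h : ℓ + m = L + 1) (hm : 1 ≤ m) {ρ : Finset (Fin n)} {τ : Finset (ChromV n ℓ)}
    (hτ : τ ∈ chromSub n ρ ℓ) :
    colorSet (fun v => saColoring j₀ σL (castV n h v)) (subOf m τ) ⊆ ↑(saVal τ) := by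
  obtain ⟨m, rfl⟩ : ∃ m', m = m' + 1 := ⟨m - 1, by omega⟩
  rintro _ ⟨v, hv, rfl⟩
  obtain ⟨hv2, hv1⟩ := mem_vertexSet_subOf_succ hv
  exact saVal_subset_of_mem_subOf hτ hv2
    (saColoring_castV_mem_saVal j₀ σL hj₀ (by omega : ℓ + m = L) hv1)

theorem saVal_subset_colorSet_saColoring (hn : 3 ≤ n) {ρ : Finset (Fin n)}
    {τ : Finset (ChromV n L)} (hτ : τ ∈ chromSub n ρ L) :
    ↑(saVal τ) ⊆ colorSet (saColoring j₀ σL) (subOf 1 τ) := by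
  intro i hi
  by_cases hin : i ∈ ids τ
  · obtain ⟨v, hv, rfl⟩ := Finset.mem_image.1 hin
    have hface : ({v} : Finset (ChromV n L)) ∈ facesOf τ :=
      ⟨Finset.singleton_nonempty v, Finset.singleton_subset_iff.2 hv⟩
    refine ⟨_, mk_mem_vertexSet_subOf_one hface
      (Finset.mem_image_of_mem _ (Finset.mem_singleton_self v)), ?_⟩
    exact saColoring_of_card_le j₀ σL (by rw [Finset.card_singleton]; omega)
  · have hbig : ¬ τ.card ≤ n - 2 := fun h => hin (by rwa [Finset.mem_coe, saVal, if_pos h] at hi)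
    rw [Finset.mem_coe, saVal, if_neg hbig] at hi
    have hids : (ids τ).card = n - 1 := by
      have := Finset.card_le_card (Finset.subset_erase.2 ⟨Finset.subset_univ (ids τ), hin⟩)
      rw [Finset.card_erase_of_mem (Finset.mem_univ i), Finset.card_univ, Fintype.card_fin] at this
      rw [card_ids_of_mem_chromSub hτ] at this ⊢
      omega
    have hE : (carr τ \ ids τ).Nonempty := ⟨i, Finset.mem_sdiff.2 ⟨hi, hin⟩⟩
    have hτne : τ.Nonempty := Finset.card_pos.1 (by rw [← card_ids_of_mem_chromSub hτ]; omega)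
    refine ⟨_, mk_mem_vertexSet_subOf_one ⟨hτne, subset_rfl⟩
      (Finset.mem_of_mem_erase (designatedColor_mem j₀ (by omega : 1 < (ids τ).card))), ?_⟩
    have hval := saColoring_mem_of_designated j₀ σL (by omega) (v := (designatedColor j₀ τ, τ))
      ((card_ids_of_mem_chromSub hτ).symm.trans hids) rfl hE
    exact Finset.eq_of_notMem_of_card_eq_pred (by rw [hids, Fintype.card_fin])
      (Finset.mem_sdiff.1 hval).2 hin

lemma exists_designated_of_injOn (hn : 3 ≤ n) {s : Finset (Fin n × Finset (ChromV n L))}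
    (hs : s ∈ subdiv (chromCol n L) (facesOf σL)) (hscard : s.card = n)
    (hinj : Set.InjOn (saColoring j₀ σL) (s : Set (Fin n × Finset (ChromV n L)))) :
    ∃ v₂ ∈ s, v₂.2.card = n - 1 ∧ v₂.1 ≠ j₀ ∧ saColoring j₀ σL v₂ ∈ carr v₂.2 \ ids v₂.2 ∧
      ∀ v ∈ s, saColoring j₀ σL v ≠ j₀ → v.2 ⊆ v₂.2 := by
  have hview : ∀ v ∈ s, v.2 ⊆ σL := fun v hv => (hs.2.1 v hv).1.2
  obtain ⟨vt, hvt, hvtmax⟩ := exists_top_of_mem_subdiv hs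
  have hcvt : saColoring j₀ σL vt = j₀ := by
    refine saColoring_of_lt_card j₀ σL (hview vt hvt) ?_
    have := Finset.card_le_card (image_fst_subset_of_top hs hvtmax)
    have := Finset.card_image_le (s := vt.2) (f := chromCol n L)
    rw [card_image_fst_of_mem_subdiv hs] at *
    omega
  have hrest : s.erase vt ∈ subdiv (chromCol n L) (facesOf σL) :=
    mem_subdiv_of_subset hs (Finset.erase_subset _ _)
      (Finset.card_pos.1 (by rw [Finset.card_erase_of_mem hvt]; omega))
  obtain ⟨v₂, hv₂, hv₂max⟩ := exists_top_of_mem_subdiv hrest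
  have hv₂s := Finset.mem_of_mem_erase hv₂
  have hids₂ : n - 1 ≤ (ids v₂.2).card := by
    have := Finset.card_le_card (image_fst_subset_of_top hrest hv₂max)
    rw [card_image_fst_of_mem_subdiv hrest, Finset.card_erase_of_mem hvt] at this
    unfold ids
    omega
  obtain ⟨hv₂card, hdes₂, hcv₂⟩ := saColoring_of_ne j₀ σL (hview v₂ hv₂s)
    (by have := Finset.card_image_le (s := v₂.2) (f := chromCol n L); unfold ids at hids₂; omega)
    fun h => Finset.ne_of_mem_erase hv₂ (hinj hv₂s hvt (h.trans hcvt.symm))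
  refine ⟨v₂, hv₂s, hv₂card,
    hdes₂ ▸ (Finset.mem_erase.1 (designatedColor_mem j₀ (by omega))).1, hcv₂, fun v hv hcv => ?_⟩
  exact hv₂max v (Finset.mem_erase.2 ⟨by rintro rfl; exact hcv hcvt, hv⟩)

theorem card_image_saColoring_lt (hn : 3 ≤ n) {s : Finset (Fin n × Finset (ChromV n L))}
    (hs : s ∈ subdiv (chromCol n L) (facesOf σL)) :
    (s.image (saColoring j₀ σL)).card < n := by
  by_contra! hge
  have hscard : s.card = n := by
    have := (Finset.card_le_univ (s.image Prod.fst)).trans_eq (Fintype.card_fin n)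
    rw [card_image_fst_of_mem_subdiv hs] at this
    exact le_antisymm this (hge.trans Finset.card_image_le)
  have hcard_image : (s.image (saColoring j₀ σL)).card = n :=
    le_antisymm (Finset.card_image_le.trans hscard.le) hge
  have himage : s.image (saColoring j₀ σL) = Finset.univ :=
    Finset.eq_univ_of_card _ (hcard_image.trans (Fintype.card_fin n).symm)
  obtain ⟨v₂, hv₂, hv₂card, hv₂j₀, hcv₂, hbelow⟩ := exists_designated_of_injOn j₀ σL hn hs hscard
    (Finset.card_image_iff.1 (hcard_image.trans hscard.symm))
  have hv₂ids : v₂.1 ∈ ids v₂.2 := (hs.2.1 v₂ hv₂).2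
  obtain ⟨v₃, hv₃, hcv₃⟩ := Finset.mem_image.1 (himage ▸ Finset.mem_univ v₂.1)
  have hv₃v₂ : v₃ ≠ v₂ := by rintro rfl; exact (Finset.mem_sdiff.1 hcv₂).2 (hcv₃ ▸ hv₂ids)
  by_cases hsmall : v₃.2.card ≤ n - 2
  · exact hs.2.2.1 v₃ hv₃ v₂ hv₂ hv₃v₂ ((saColoring_of_card_le j₀ σL hsmall).symm.trans hcv₃)
  · obtain ⟨hv₃card, -, hcv₃'⟩ :=
      saColoring_of_ne j₀ σL (hs.2.1 v₃ hv₃).1.2 (by omega) (hcv₃ ▸ hv₂j₀)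
    have heq : v₃.2 = v₂.2 :=
      Finset.eq_of_subset_of_card_le (hbelow v₃ hv₃ (hcv₃ ▸ hv₂j₀)) (by omega)
    exact (Finset.mem_sdiff.1 hcv₃').2 (heq ▸ hcv₃ ▸ hv₂ids)

end Coloring

lemma exists_mem_carr_of_card_eq {n K : ℕ} (hn : 2 ≤ n) {ρ : Finset (Fin n)}
    {σL : Finset (ChromV n (K + 1))} (hσ : σL ∈ chromSub n ρ (K + 1)) (hcard : σL.card = n) :
    ∃ j₀ : Fin n, ∀ γ ⊆ σL, n - 1 ≤ γ.card → j₀ ∈ carr γ := by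
  have : Nontrivial (Fin n) := Fin.nontrivial_iff_two_le.2 hn
  obtain ⟨w, hw, hwmax⟩ := exists_top_of_mem_subdiv hσ
  obtain ⟨j₀, hj₀⟩ := exists_ne w.1
  have hids : ids σL = Finset.univ := Finset.eq_univ_of_card _
    ((card_ids_of_mem_chromSub hσ).trans (hcard.trans (Fintype.card_fin n).symm))
  obtain ⟨u, hu, hu₀⟩ := Finset.mem_image.1 (hids ▸ Finset.mem_univ j₀)
  refine ⟨j₀, fun γ hγ hγcard => ?_⟩
  by_cases huγ : u ∈ γ
  · exact ids_subset_carr γ (hu₀ ▸ Finset.mem_image_of_mem _ huγ)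
  · have hγu : γ = σL.erase u := Finset.eq_of_subset_of_card_le
      (Finset.subset_erase.2 ⟨hγ, huγ⟩) (by rw [Finset.card_erase_of_mem hu]; omega)
    have hwγ : w ∈ γ := by
      rw [hγu]
      exact Finset.mem_erase.2 ⟨by rintro rfl; exact hj₀ hu₀.symm, hw⟩
    exact ids_snd_subset_carr hwγ
      (image_fst_subset_of_top hσ hwmax (hids ▸ Finset.mem_univ j₀ : j₀ ∈ ids σL))

lemma mem_chromSub_univ_of_chain {n R : ℕ} (hn : 0 < n) {σs : ∀ ℓ : ℕ, Finset (ChromV n ℓ)}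
    (h0 : σs 0 = (Finset.univ : Finset (Fin n))) (hstep : ∀ ℓ < R, σs (ℓ + 1) ∈ subOf 1 (σs ℓ)) :
    ∀ ℓ ≤ R, σs ℓ ∈ chromSub n Finset.univ ℓ
  | 0, _ => by rw [h0]; exact ⟨⟨⟨0, hn⟩, Finset.mem_univ (⟨0, hn⟩ : Fin n)⟩, subset_rfl⟩
  | ℓ + 1, hℓ => subOf_subset_chromSub
      (mem_chromSub_univ_of_chain hn h0 hstep ℓ (by omega)) (hstep ℓ (by omega))

/-- Here `R = R₁ + 1` is the number of rounds and `σs 0, σs 1, …, σs R₁` is the selected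
sequence of simplexes. -/
theorem no_local_valency_impossibility_proof
    (n R₁ : ℕ) (hn : 3 ≤ n) (hR : 1 ≤ R₁)
    (σs : ∀ ℓ : ℕ, Finset (ChromV n ℓ))
    (h0 : σs 0 = (Finset.univ : Finset (Fin n)))
    (hstep : ∀ ℓ < R₁, σs (ℓ + 1) ∈ subOf 1 (σs ℓ) ∧ (σs (ℓ + 1)).card = n) :
    ∃ c : ChromV n (R₁ + 1) → Fin n,
      (∀ τ ∈ chromSub n Finset.univ R₁, colorSet c (subOf 1 τ) ⊆ ↑(saVal τ)) ∧
      (∀ τ ∈ chromSub n Finset.univ R₁, colorSet c (subOf 1 τ) = ↑(saVal τ)) ∧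
      (∀ ℓ m : ℕ, 1 ≤ ℓ → 1 ≤ m → ∀ h : ℓ + m = R₁ + 1,
        ∀ τ ∈ chromSub n Finset.univ ℓ,
          colorSet (fun v => c (castV n h v)) (subOf m τ) ⊆ ↑(saVal τ)) ∧
      (∀ s ∈ subOf 1 (σs R₁), (s.image c).card < n) := by
  obtain ⟨K, rfl⟩ : ∃ K, R₁ = K + 1 := ⟨R₁ - 1, by omega⟩
  have hσL : σs (K + 1) ∈ chromSub n Finset.univ (K + 1) :=
    mem_chromSub_univ_of_chain (by omega) h0 (fun ℓ hℓ => (hstep ℓ hℓ).1) (K + 1) le_rfl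
  have hcard : (σs (K + 1)).card = n := (hstep K (by omega)).2
  obtain ⟨j₀, hj₀⟩ := exists_mem_carr_of_card_eq (by omega) hσL hcard
  refine ⟨saColoring j₀ (σs (K + 1)),
    fun τ hτ => colorSet_saColoring_subset_saVal j₀ _ hj₀ rfl le_rfl hτ, fun τ hτ => ?_,
    fun ℓ m _ hm h τ hτ => colorSet_saColoring_subset_saVal j₀ _ hj₀ h hm hτ,
    fun s hs => card_image_saColoring_lt j₀ _ hn hs⟩
  exact (colorSet_saColoring_subset_saVal j₀ _ hj₀ rfl le_rfl hτ).antisymm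
    (saVal_subset_colorSet_saColoring j₀ _ hn hτ)
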